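/- arXiv:1408.5291 — 2 statements merged into one kernel-verified Lean document; each statement's English description precedes it below -/
import Mathlib

section
/- Negative dependence for upper expectations over a family of probability measures: Let 𝒫 be a family of probability measures on a measurable space (Ω, 𝓕) and define the upper expectation E[ξ] := sup_{Q ∈ 𝒫} E_Q[ξ]. If the random vectors X = (X_1,…,X_m) and Y = (Y_1,…,Y_n) are independent under each Q ∈ 𝒫, then Y is negatively dependent to X under E; that is, E[φ_1(X)φ_2(Y)] ≤ E[φ_1(X)]·E[φ_2(Y)] for every pair of test functions φ_1 ∈ C_{l,Lip}(ℝ^m), φ_2 ∈ C_{l,Lip}(ℝ^n) that are either both coordinatewise nondecreasing or both coordinatewise nonincreasing and satisfy φ_1(X) ≥ 0, E[φ_2(Y)] ≥ 0, and E[|φ_1(X)φ_2(Y)|], E[|φ_1(X)|], E[|φ_2(Y)|] < ∞. -/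
open scoped BigOperators ENNReal
open Filter

/-- The class `C_{l,Lip}(ℝ^n)` of local-Lipschitz test functions:
`|φ(x) − φ(y)| ≤ C (1 + |x|^m + |y|^m) |x − y|` for some `C > 0` and `m ∈ ℕ`. -/
def CLLip {n : ℕ} (φ : (Fin n → ℝ) → ℝ) : Prop :=
  ∃ C > (0:ℝ), ∃ m : ℕ, ∀ x y : Fin n → ℝ,
    |φ x - φ y| ≤ C * (1 + ‖x‖ ^ m + ‖y‖ ^ m) * ‖x - y‖

/-- A sub-linear expectation space `(Ω, ℋ, E)`: `ℋ` is a set of real random variables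
containing the constants and stable under composition with `C_{l,Lip}` functions, and
`E : ℋ → [-∞, ∞]` is monotone, constant preserving, sub-additive (whenever the right-hand
side is not of the form `∞ - ∞`) and positively homogeneous. -/
structure SLE (Ω : Type*) where
  H : Set (Ω → ℝ)
  E : (Ω → ℝ) → EReal
  const_mem : ∀ c : ℝ, (fun _ => c) ∈ H
  comp_mem : ∀ {n : ℕ} (X : Fin n → Ω → ℝ) (φ : (Fin n → ℝ) → ℝ),
      (∀ i, X i ∈ H) → CLLip φ → (fun ω => φ (fun i => X i ω)) ∈ H
  mono : ∀ {X Y : Ω → ℝ}, X ∈ H → Y ∈ H → (∀ ω, X ω ≤ Y ω) → E X ≤ E Y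
  const_eq : ∀ c : ℝ, E (fun _ => c) = (c : EReal)
  subadd : ∀ {X Y : Ω → ℝ}, X ∈ H → Y ∈ H →
      ¬(E X = ⊤ ∧ E Y = ⊥) → ¬(E X = ⊥ ∧ E Y = ⊤) →
      E (fun ω => X ω + Y ω) ≤ E X + E Y
  homog : ∀ {X : Ω → ℝ}, X ∈ H → ∀ l : ℝ, 0 ≤ l →
      E (fun ω => l * X ω) = (l : EReal) * E X

/-- The canonical map from `[-∞,∞]` to `[0,∞]` (faithful on nonnegative values). -/
noncomputable def erealToENNReal (x : EReal) : ℝ≥0∞ :=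
  if x = ⊤ then ⊤ else ENNReal.ofReal x.toReal

namespace SLE

variable {Ω : Type*}

/-- The conjugate (lower) expectation `ℰ[X] := -E[-X]`. -/
noncomputable def cE (S : SLE Ω) (X : Ω → ℝ) : EReal := - S.E (fun ω => - X ω)

/-- `Y` (an `n`-dimensional random vector) is independent to `X` (an `m`-dimensional
random vector) under the sub-linear expectation `E`:
`E[φ(X,Y)] = E[ E[φ(x,Y)]|_{x=X} ]` for every `φ ∈ C_{l,Lip}(ℝ^m × ℝ^n)` such that
`φ̄(x) := E[|φ(x,Y)|] < ∞` for every `x` and `E[|φ̄(X)|] < ∞`. -/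
def IndepTo (S : SLE Ω) {m n : ℕ} (X : Fin m → Ω → ℝ) (Y : Fin n → Ω → ℝ) : Prop :=
  ∀ φ : (Fin (m + n) → ℝ) → ℝ, CLLip φ →
    (∀ x : Fin m → ℝ, S.E (fun ω' => |φ (Fin.append x (fun i => Y i ω'))|) ≠ ⊤) →
    S.E (fun ω =>
      |(S.E (fun ω' => |φ (Fin.append (fun i => X i ω) (fun i => Y i ω'))|)).toReal|) ≠ ⊤ →
    S.E (fun ω => φ (Fin.append (fun i => X i ω) (fun i => Y i ω))) =
      S.E (fun ω => (S.E (fun ω' => φ (Fin.append (fun i => X i ω) (fun i => Y i ω')))).toReal)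

/-- `Y` (an `n`-dimensional random vector) is negatively dependent to `X`
(an `m`-dimensional random vector) under the sub-linear expectation `E`:
`E[φ₁(X) φ₂(Y)] ≤ E[φ₁(X)] E[φ₂(Y)]` for every pair of test functions
`φ₁ ∈ C_{l,Lip}(ℝ^m)`, `φ₂ ∈ C_{l,Lip}(ℝ^n)` which are both coordinatewise nondecreasing
or both coordinatewise nonincreasing, with `φ₁(X) ≥ 0`, `E[φ₂(Y)] ≥ 0` and
`E[|φ₁(X) φ₂(Y)|], E[|φ₁(X)|], E[|φ₂(Y)|] < ∞`. -/
def NegDepTo (S : SLE Ω) {m n : ℕ} (X : Fin m → Ω → ℝ) (Y : Fin n → Ω → ℝ) : Prop :=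
  ∀ (φ₁ : (Fin m → ℝ) → ℝ) (φ₂ : (Fin n → ℝ) → ℝ), CLLip φ₁ → CLLip φ₂ →
    ((Monotone φ₁ ∧ Monotone φ₂) ∨ (Antitone φ₁ ∧ Antitone φ₂)) →
    (∀ ω, 0 ≤ φ₁ (fun i => X i ω)) →
    0 ≤ S.E (fun ω => φ₂ (fun i => Y i ω)) →
    S.E (fun ω => |φ₁ (fun i => X i ω) * φ₂ (fun i => Y i ω)|) ≠ ⊤ →
    S.E (fun ω => |φ₁ (fun i => X i ω)|) ≠ ⊤ →
    S.E (fun ω => |φ₂ (fun i => Y i ω)|) ≠ ⊤ →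
    S.E (fun ω => φ₁ (fun i => X i ω) * φ₂ (fun i => Y i ω)) ≤
      S.E (fun ω => φ₁ (fun i => X i ω)) * S.E (fun ω => φ₂ (fun i => Y i ω))

/-- The capacity generated by a sub-linear expectation:
`V(A) := inf{E[ξ] : I_A ≤ ξ, ξ ∈ ℋ}`. -/
noncomputable def V (S : SLE Ω) (A : Set Ω) : EReal :=
  sInf (S.E '' {ξ | ξ ∈ S.H ∧ ∀ ω, A.indicator (fun _ => (1:ℝ)) ω ≤ ξ ω})

/-- The outer capacity `V*(A) := inf{Σ_n V(A_n) : A ⊆ ⋃_n A_n}`. -/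
noncomputable def Vstar (S : SLE Ω) (A : Set Ω) : EReal :=
  sInf {x : EReal | ∃ B : ℕ → Set Ω, A ⊆ ⋃ i, B i ∧
    x = ((∑' i, erealToENNReal (S.V (B i)) : ℝ≥0∞) : EReal)}

/-- The Choquet integral
`C_V[X] := ∫_0^∞ V(X ≥ t) dt + ∫_{-∞}^0 (V(X ≥ t) − 1) dt`. -/
noncomputable def choquet (S : SLE Ω) (X : Ω → ℝ) : EReal :=
  ((∫⁻ t in Set.Ioi (0:ℝ), erealToENNReal (S.V {ω | t ≤ X ω}) : ℝ≥0∞) : EReal)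
    - ((∫⁻ t in Set.Iio (0:ℝ), erealToENNReal (1 - S.V {ω | t ≤ X ω}) : ℝ≥0∞) : EReal)

/-- A sequence `{X_n ; n ≥ 1}` is identically distributed:
`E[φ(X_i)] = E[φ(X_1)]` for all `i ≥ 1` and `φ ∈ C_{l,Lip}(ℝ)`. -/
def IdentDistrib (S : SLE Ω) (X : ℕ → Ω → ℝ) : Prop :=
  ∀ i : ℕ, 1 ≤ i → ∀ φ : (Fin 1 → ℝ) → ℝ, CLLip φ →
    S.E (fun ω => φ (fun _ => X i ω)) = S.E (fun ω => φ (fun _ => X 1 ω))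

/-- A sequence `{X_n ; n ≥ 1}` is negatively dependent:
`X_{i+1}` is negatively dependent to `(X_1, …, X_i)` for every `i ≥ 1`. -/
def NegDepSeq (S : SLE Ω) (X : ℕ → Ω → ℝ) : Prop :=
  ∀ i : ℕ, 1 ≤ i →
    S.NegDepTo (fun j : Fin i => X ((j : ℕ) + 1)) (fun _ : Fin 1 => X (i + 1))

/-- A sequence `{X_n ; n ≥ 1}` is independent:
`X_{i+1}` is independent to `(X_1, …, X_i)` for every `i ≥ 1`. -/
def IndepSeq (S : SLE Ω) (X : ℕ → Ω → ℝ) : Prop :=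
  ∀ i : ℕ, 1 ≤ i →
    S.IndepTo (fun j : Fin i => X ((j : ℕ) + 1)) (fun _ : Fin 1 => X (i + 1))

end SLE

open MeasureTheory in
/-- The upper expectation generated by a family `𝒫` of probability measures:
`E[ξ] := sup_{Q ∈ 𝒫} E_Q[ξ]`. -/
noncomputable def upperExp {Ω : Type*} [MeasurableSpace Ω]
    (P : Set (Measure Ω)) (f : Ω → ℝ) : EReal :=
  ⨆ Q ∈ P, ((∫ ω, f ω ∂Q : ℝ) : EReal)

/-!
Under each `Q ∈ 𝒫`, independence of `X` and `Y` factorises `E_Q[φ₁(X) φ₂(Y)]` as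
`E_Q[φ₁(X)] · E_Q[φ₂(Y)]`. The first factor is nonnegative and at most `E[φ₁(X)]`, the second
is at most `E[φ₂(Y)] ≥ 0`, so each product is at most `E[φ₁(X)] · E[φ₂(Y)]`; taking the
supremum over `Q` gives the claim.
-/

lemma CLLip.continuous {k : ℕ} {φ : (Fin k → ℝ) → ℝ} (h : CLLip φ) : Continuous φ := by
  obtain ⟨C, -, m, hφ⟩ := h
  refine continuous_iff_continuousAt.2 fun y => tendsto_sub_nhds_zero_iff.1 ?_
  have hbound : Tendsto (fun x : Fin k → ℝ => C * (1 + ‖x‖ ^ m + ‖y‖ ^ m) * ‖x - y‖)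
      (nhds y) (nhds 0) := by
    simpa using (by fun_prop : Continuous fun x : Fin k → ℝ =>
      C * (1 + ‖x‖ ^ m + ‖y‖ ^ m) * ‖x - y‖).tendsto y
  exact squeeze_zero_norm (fun x => by simpa using hφ x y) hbound

section upperExp

open MeasureTheory

variable {Ω : Type*} [MeasurableSpace Ω] {P : Set (Measure Ω)}

lemma integral_le_upperExp {Q : Measure Ω} (hQ : Q ∈ P) (f : Ω → ℝ) :
    ((∫ ω, f ω ∂Q : ℝ) : EReal) ≤ upperExp P f :=
  le_iSup₂ (f := fun Q _ => ((∫ ω, f ω ∂Q : ℝ) : EReal)) Q hQ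

lemma upperExp_mul_le_of_integral_mul {f g : Ω → ℝ} (hf : ∀ Q ∈ P, 0 ≤ ∫ ω, f ω ∂Q)
    (hg : 0 ≤ upperExp P g)
    (hfg : ∀ Q ∈ P, ∫ ω, f ω * g ω ∂Q = (∫ ω, f ω ∂Q) * ∫ ω, g ω ∂Q) :
    upperExp P (fun ω => f ω * g ω) ≤ upperExp P f * upperExp P g := by
  refine iSup₂_le fun Q hQ => ?_
  rw [hfg Q hQ, EReal.coe_mul]
  calc ((∫ ω, f ω ∂Q : ℝ) : EReal) * ((∫ ω, g ω ∂Q : ℝ) : EReal)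
      ≤ ((∫ ω, f ω ∂Q : ℝ) : EReal) * upperExp P g :=
        mul_le_mul_of_nonneg_left (integral_le_upperExp hQ g) (EReal.coe_nonneg.2 (hf Q hQ))
    _ ≤ upperExp P f * upperExp P g :=
        mul_le_mul_of_nonneg_right (integral_le_upperExp hQ f) hg

end upperExp

open MeasureTheory in
theorem negDep_of_indep_upperExp_general {Ω : Type*} [MeasurableSpace Ω]
    (P : Set (Measure Ω))
    {m n : ℕ} (X : Ω → (Fin m → ℝ)) (Y : Ω → (Fin n → ℝ))
    (hX : Measurable X) (hY : Measurable Y)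
    (hindep : ∀ Q ∈ P, ProbabilityTheory.IndepFun X Y Q)
    (φ₁ : (Fin m → ℝ) → ℝ) (φ₂ : (Fin n → ℝ) → ℝ)
    (hφ₁ : CLLip φ₁) (hφ₂ : CLLip φ₂)
    (hpos : ∀ ω, 0 ≤ φ₁ (X ω))
    (hE2 : 0 ≤ upperExp P (fun ω => φ₂ (Y ω))) :
    upperExp P (fun ω => φ₁ (X ω) * φ₂ (Y ω))
      ≤ upperExp P (fun ω => φ₁ (X ω)) * upperExp P (fun ω => φ₂ (Y ω)) :=
  upperExp_mul_le_of_integral_mul (fun _ _ => integral_nonneg hpos) hE2 fun Q hQ =>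
    (hindep Q hQ).integral_fun_comp_mul_comp hX.aemeasurable hY.aemeasurable
      hφ₁.continuous.aestronglyMeasurable hφ₂.continuous.aestronglyMeasurable

open MeasureTheory in
/-- **Negative dependence for upper expectations over a family of probability measures.**
If the random vectors `X` and `Y` are independent under each `Q ∈ 𝒫`, then `Y` is
negatively dependent to `X` under the upper expectation `E[ξ] = sup_{Q ∈ 𝒫} E_Q[ξ]`. -/
theorem negDep_of_indep_upperExp {Ω : Type*} [MeasurableSpace Ω]
    (P : Set (Measure Ω)) (hP : ∀ Q ∈ P, IsProbabilityMeasure Q)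
    {m n : ℕ} (X : Ω → (Fin m → ℝ)) (Y : Ω → (Fin n → ℝ))
    (hX : Measurable X) (hY : Measurable Y)
    (hindep : ∀ Q ∈ P, ProbabilityTheory.IndepFun X Y Q)
    (φ₁ : (Fin m → ℝ) → ℝ) (φ₂ : (Fin n → ℝ) → ℝ)
    (hφ₁ : CLLip φ₁) (hφ₂ : CLLip φ₂)
    (hmono : (Monotone φ₁ ∧ Monotone φ₂) ∨ (Antitone φ₁ ∧ Antitone φ₂))
    (hpos : ∀ ω, 0 ≤ φ₁ (X ω))
    (hE2 : 0 ≤ upperExp P (fun ω => φ₂ (Y ω)))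
    (hfin12 : upperExp P (fun ω => |φ₁ (X ω) * φ₂ (Y ω)|) < ⊤)
    (hfin1 : upperExp P (fun ω => |φ₁ (X ω)|) < ⊤)
    (hfin2 : upperExp P (fun ω => |φ₂ (Y ω)|) < ⊤) :
    upperExp P (fun ω => φ₁ (X ω) * φ₂ (Y ω))
      ≤ upperExp P (fun ω => φ₁ (X ω)) * upperExp P (fun ω => φ₂ (Y ω)) :=
  negDep_of_indep_upperExp_general P X Y hX hY hindep φ₁ φ₂ hφ₁ hφ₂ hpos hE2
end

section
/- Strong law of large numbers, converse part (Theorem 3(b)): Let {X_n; n ≥ 1} be a sequence of independent and identically distributed random variables in a sub-linear expectation space (Ω, ℋ, E), and let V be the capacity generated by E. Suppose V is continuous. If V( limsup_{n→∞} |S_n|/n = +∞ ) < 1, then C_V[|X_1|] < ∞. -/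
open scoped BigOperators ENNReal
open Filter

/-!
If `C_V[|X_1|] = ∞`, then `∑ₘ V(|X_1| ≥ c m) = ∞` for every `c > 0`. Independence gives the
product formula `E[1 - ∏_{k ≤ m} (1 - g_k(X_k))] = 1 - ∏_{k ≤ m} (1 - E[g_k(X_k)])` for
`[0,1]`-valued Lipschitz `g_k`; with `g_k` Lipschitz cut-offs of `{|x| > c k}` the right-hand side
tends to `1`, so `V(⋃_{k > N} {|X_k| > c k}) = 1` for every `N` (a second Borel–Cantelli lemma for
`V`). Continuity of `V` from above then gives capacity one to the event that `|X_k| > c k`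
infinitely often for every `c`, on which `limsup |S_n| / n = ∞` because
`|X_k| ≤ |S_k| + |S_{k-1}|`.
-/

open MeasureTheory Finset
open scoped NNReal Topology

lemma CLLip.of_lipschitzWith {n : ℕ} {φ : (Fin n → ℝ) → ℝ} {K : ℝ≥0}
    (hφ : LipschitzWith K φ) : CLLip φ := by
  refine ⟨K + 1, by positivity, 0, fun x y => ?_⟩
  have h := hφ.dist_le_mul x y
  rw [Real.dist_eq, dist_eq_norm] at h
  nlinarith [norm_nonneg (x - y)]

lemma LipschitzWith.mul_of_abs_le_one {α : Type*} [PseudoMetricSpace α] {f g : α → ℝ}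
    {Kf Kg : ℝ≥0} (hf : LipschitzWith Kf f) (hg : LipschitzWith Kg g)
    (hf1 : ∀ x, |f x| ≤ 1) (hg1 : ∀ x, |g x| ≤ 1) :
    LipschitzWith (Kf + Kg) fun x => f x * g x := by
  refine LipschitzWith.of_dist_le_mul fun x y => ?_
  have hfd := hf.dist_le_mul x y
  have hgd := hg.dist_le_mul x y
  rw [Real.dist_eq] at hfd hgd ⊢
  calc |f x * g x - f y * g y| = |f x * (g x - g y) + (f x - f y) * g y| := by ring_nf
    _ ≤ |f x| * |g x - g y| + |f x - f y| * |g y| := by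
        rw [← abs_mul, ← abs_mul]; exact abs_add_le _ _
    _ ≤ 1 * |g x - g y| + |f x - f y| * 1 := by
        gcongr
        · exact hf1 x
        · exact hg1 y
    _ ≤ (Kf + Kg) * dist x y := by linarith

lemma LipschitzWith.prod_of_abs_le_one {ι α : Type*} [PseudoMetricSpace α] (s : Finset ι)
    {f : ι → α → ℝ} {K : ι → ℝ≥0} (hf : ∀ i, LipschitzWith (K i) (f i))
    (hf1 : ∀ i x, |f i x| ≤ 1) :
    LipschitzWith (∑ i ∈ s, K i) fun x => ∏ i ∈ s, f i x := by
  classical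
  induction s using Finset.induction_on with
  | empty => simp
  | insert i s hi ih =>
    simp only [sum_insert hi, prod_insert hi]
    refine (hf i).mul_of_abs_le_one ih (hf1 i) fun x => ?_
    rw [abs_prod]
    exact prod_le_one (fun _ _ => abs_nonneg _) fun j _ => hf1 j x

lemma tendsto_prod_one_sub_of_not_summable {e : ℕ → ℝ} (h0 : ∀ k, 0 ≤ e k)
    (h1 : ∀ k, e k ≤ 1) (h : ¬Summable e) :
    Tendsto (fun m => ∏ k ∈ range m, (1 - e k)) atTop (𝓝 0) := by
  have hsum := (not_summable_iff_tendsto_nat_atTop_of_nonneg h0).mp h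
  have hexp : Tendsto (fun m => Real.exp (-∑ k ∈ range m, e k)) atTop (𝓝 0) :=
    Real.tendsto_exp_atBot.comp (tendsto_neg_atTop_atBot.comp hsum)
  refine tendsto_of_tendsto_of_tendsto_of_le_of_le tendsto_const_nhds hexp
    (fun m => prod_nonneg fun k _ => sub_nonneg.mpr (h1 k)) fun m => ?_
  calc ∏ k ∈ range m, (1 - e k) ≤ ∏ k ∈ range m, Real.exp (-e k) :=
        prod_le_prod (fun k _ => sub_nonneg.mpr (h1 k)) fun k _ => Real.one_sub_le_exp_neg _
    _ = Real.exp (-∑ k ∈ range m, e k) := by rw [← Real.exp_sum, sum_neg_distrib]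

lemma lintegral_Ioi_le_tsum_mul_of_antitone {F : ℝ → ℝ≥0∞} (hF : Antitone F) {c : ℝ}
    (hc : 0 < c) :
    ∫⁻ t in Set.Ioi 0, F t ≤ (∑' m : ℕ, F (c * m)) * ENNReal.ofReal c := by
  have hcover : Set.Ioi (0 : ℝ) ⊆ ⋃ m : ℕ, Set.Ico (c * m) (c * (m + 1)) := fun t ht => by
    have ht' : 0 ≤ t / c := div_nonneg (le_of_lt ht) hc.le
    refine Set.mem_iUnion.mpr ⟨⌊t / c⌋₊, ?_, ?_⟩
    · rw [← le_div_iff₀' hc]; exact Nat.floor_le ht'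
    · rw [← div_lt_iff₀' hc]; exact Nat.lt_floor_add_one _
  calc ∫⁻ t in Set.Ioi 0, F t ≤ ∫⁻ t in ⋃ m : ℕ, Set.Ico (c * m) (c * (m + 1)), F t :=
        lintegral_mono_set hcover
    _ ≤ ∑' m : ℕ, ∫⁻ t in Set.Ico (c * m) (c * (m + 1)), F t := lintegral_iUnion_le _ _
    _ ≤ ∑' m : ℕ, ∫⁻ _ in Set.Ico (c * m) (c * (m + 1)), F (c * m) :=
        ENNReal.tsum_le_tsum fun m => setLIntegral_mono measurable_const fun t ht => hF ht.1
    _ = (∑' m : ℕ, F (c * m)) * ENNReal.ofReal c := by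
        rw [← ENNReal.tsum_mul_right]
        refine tsum_congr fun m => ?_
        rw [setLIntegral_const, Real.volume_Ico]
        ring_nf

lemma limsup_abs_sum_Icc_div_eq_top {x : ℕ → ℝ}
    (h : ∀ C : ℝ, ∃ᶠ k in atTop, C * k < |x k|) :
    Filter.limsup (fun n : ℕ => ((|∑ k ∈ Icc 1 n, x k| / n : ℝ) : EReal)) atTop = ⊤ := by
  refine (EReal.eq_top_iff_forall_lt _).mpr fun C => ?_
  suffices hC : ∀ C : ℝ, 0 ≤ C → ∃ᶠ n in atTop, C ≤ |∑ k ∈ Icc 1 n, x k| / n by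
    have hlt : C < max C 0 + 1 := by linarith [le_max_left C 0]
    refine (EReal.coe_lt_coe_iff.mpr hlt).trans_le (le_limsup_of_frequently_le' ?_)
    exact (hC _ (by positivity)).mono fun n hn => EReal.coe_le_coe_iff.mpr hn
  intro C hC
  refine frequently_atTop.mpr fun a => ?_
  obtain ⟨k, hka, hk⟩ := frequently_atTop.mp (h (2 * C)) (a + 2)
  obtain ⟨j, rfl⟩ : ∃ j, k = j + 1 := ⟨k - 1, by omega⟩
  have hj : (1 : ℝ) ≤ j := by exact_mod_cast (by omega : 1 ≤ j)
  -- `x (j+1) = S (j+1) - S j`, so one of the two partial sums is at least `C (j+1)`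
  have hx : |x (j + 1)| ≤ |∑ k ∈ Icc 1 (j + 1), x k| + |∑ k ∈ Icc 1 j, x k| := by
    rw [sum_Icc_succ_top (by omega : 1 ≤ j + 1)]
    have := abs_sub (∑ k ∈ Icc 1 j, x k + x (j + 1)) (∑ k ∈ Icc 1 j, x k)
    rwa [add_sub_cancel_left] at this
  push_cast at hk
  by_cases hS : C * (j + 1) ≤ |∑ k ∈ Icc 1 (j + 1), x k|
  · refine ⟨j + 1, by omega, ?_⟩
    push_cast
    rwa [le_div_iff₀ (by positivity)]
  · refine ⟨j, by omega, ?_⟩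
    rw [le_div_iff₀ (by positivity)]
    nlinarith

noncomputable def absRamp (a x : ℝ) : ℝ := min 1 (max 0 (|x| / a - 1))

section absRamp

variable {a : ℝ}

lemma absRamp_mem_Icc (x : ℝ) : absRamp a x ∈ Set.Icc 0 1 :=
  ⟨le_min zero_le_one (le_max_left _ _), min_le_left _ _⟩

lemma lipschitzWith_absRamp (ha : 0 < a) : LipschitzWith (Real.toNNReal a⁻¹) (absRamp a) := by
  refine (LipschitzWith.of_dist_le_mul fun x y => ?_).const_max 0 |>.const_min 1
  rw [Real.coe_toNNReal _ (inv_nonneg.mpr ha.le), Real.dist_eq, Real.dist_eq,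
    sub_sub_sub_cancel_right, ← sub_div, abs_div, abs_of_pos ha, div_eq_inv_mul]
  exact mul_le_mul_of_nonneg_left (abs_abs_sub_abs_le_abs_sub x y) (inv_nonneg.mpr ha.le)

lemma absRamp_eq_one (ha : 0 < a) {x : ℝ} (hx : 2 * a ≤ |x|) : absRamp a x = 1 := by
  have : 1 ≤ |x| / a - 1 := by rw [le_sub_iff_add_le, le_div_iff₀ ha]; linarith
  simp [absRamp, max_eq_right (zero_le_one.trans this), this]

lemma lt_abs_of_absRamp_ne_zero (ha : 0 < a) {x : ℝ} (hx : absRamp a x ≠ 0) : a < |x| := by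
  by_contra! h
  have : |x| / a - 1 ≤ 0 := by rw [sub_nonpos, div_le_one ha]; exact h
  simp [absRamp, max_eq_left this] at hx

end absRamp

namespace SLE

variable {Ω : Type*} (S : SLE Ω)

lemma comp_mem_of_lipschitzWith {n : ℕ} {X : Fin n → Ω → ℝ} (hX : ∀ i, X i ∈ S.H)
    {φ : (Fin n → ℝ) → ℝ} {K : ℝ≥0} (hφ : LipschitzWith K φ) :
    (fun ω => φ fun i => X i ω) ∈ S.H :=
  S.comp_mem X φ hX (CLLip.of_lipschitzWith hφ)

lemma comp_mem_of_lipschitzWith₁ {Z : Ω → ℝ} (hZ : Z ∈ S.H) {ψ : ℝ → ℝ} {K : ℝ≥0}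
    (hψ : LipschitzWith K ψ) : (fun ω => ψ (Z ω)) ∈ S.H :=
  S.comp_mem_of_lipschitzWith (X := fun _ : Fin 1 => Z) (fun _ => hZ)
    (hψ.comp (LipschitzWith.eval 0))

lemma E_le_of_forall_le {Z : Ω → ℝ} (hZ : Z ∈ S.H) {b : ℝ} (h : ∀ ω, Z ω ≤ b) : S.E Z ≤ b := by
  simpa only [S.const_eq] using S.mono hZ (S.const_mem b) h

lemma le_E_of_forall_le {Z : Ω → ℝ} (hZ : Z ∈ S.H) {a : ℝ} (h : ∀ ω, a ≤ Z ω) :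
    (a : EReal) ≤ S.E Z := by
  simpa only [S.const_eq] using S.mono (S.const_mem a) hZ h

lemma coe_toReal_E {Z : Ω → ℝ} (hZ : Z ∈ S.H) {a b : ℝ} (ha : ∀ ω, a ≤ Z ω)
    (hb : ∀ ω, Z ω ≤ b) : ((S.E Z).toReal : EReal) = S.E Z :=
  EReal.coe_toReal ((S.E_le_of_forall_le hZ hb).trans_lt (EReal.coe_lt_top b)).ne
    ((EReal.bot_lt_coe a).trans_le (S.le_E_of_forall_le hZ ha)).ne'

lemma toReal_E_mem_Icc {Z : Ω → ℝ} (hZ : Z ∈ S.H) {a b : ℝ} (ha : ∀ ω, a ≤ Z ω)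
    (hb : ∀ ω, Z ω ≤ b) : (S.E Z).toReal ∈ Set.Icc a b := by
  have hE := S.coe_toReal_E hZ ha hb
  constructor
  · exact EReal.coe_le_coe_iff.mp (hE ▸ S.le_E_of_forall_le hZ ha)
  · exact EReal.coe_le_coe_iff.mp (hE ▸ S.E_le_of_forall_le hZ hb)

lemma E_add_const {Z : Ω → ℝ} (hZ : Z ∈ S.H) (a : ℝ) :
    S.E (fun ω => Z ω + a) = S.E Z + a := by
  have hZa : (fun ω => Z ω + a) ∈ S.H :=
    S.comp_mem_of_lipschitzWith₁ hZ (LipschitzWith.id.add (LipschitzWith.const a))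
  refine le_antisymm ?_ ?_
  · simpa only [S.const_eq] using S.subadd hZ (S.const_mem a) (by simp [S.const_eq])
      (by simp [S.const_eq])
  · have h := S.subadd hZa (S.const_mem (-a)) (by simp [S.const_eq]) (by simp [S.const_eq])
    simp only [add_neg_cancel_right, S.const_eq] at h
    calc S.E Z + a ≤ S.E (fun ω => Z ω + a) + ((-a : ℝ) : EReal) + a := by gcongr
      _ = S.E (fun ω => Z ω + a) := by
        rw [add_assoc, ← EReal.coe_add, neg_add_cancel, EReal.coe_zero, add_zero]

lemma E_const_add_mul {Z : Ω → ℝ} (hZ : Z ∈ S.H) {z : ℝ} (hz : S.E Z = z) (a : ℝ) {b : ℝ}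
    (hb : 0 ≤ b) : S.E (fun ω => a + b * Z ω) = ((a + b * z : ℝ) : EReal) := by
  have hbZ : (fun ω => b * Z ω) ∈ S.H :=
    S.comp_mem_of_lipschitzWith₁ hZ (lipschitzWith_smul b)
  simp only [add_comm a, S.E_add_const hbZ, S.homog hZ b hb, hz]
  norm_cast

lemma V_le_E {A : Set Ω} {ξ : Ω → ℝ} (hξ : ξ ∈ S.H)
    (h : ∀ ω, A.indicator (fun _ => (1 : ℝ)) ω ≤ ξ ω) : S.V A ≤ S.E ξ :=
  sInf_le ⟨ξ, ⟨hξ, h⟩, rfl⟩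

lemma E_le_V {A : Set Ω} {η : Ω → ℝ} (hη : η ∈ S.H)
    (h : ∀ ω, η ω ≤ A.indicator (fun _ => (1 : ℝ)) ω) : S.E η ≤ S.V A :=
  le_sInf <| by
    rintro _ ⟨ξ, ⟨hξ, hAξ⟩, rfl⟩
    exact S.mono hη hξ fun ω => (h ω).trans (hAξ ω)

lemma V_mono {A B : Set Ω} (hAB : A ⊆ B) : S.V A ≤ S.V B :=
  le_sInf <| by
    rintro _ ⟨ξ, ⟨hξ, hBξ⟩, rfl⟩
    exact S.V_le_E hξ fun ω =>
      (Set.indicator_le_indicator_of_subset hAB (fun _ => zero_le_one) ω).trans (hBξ ω)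

lemma V_nonneg (A : Set Ω) : 0 ≤ S.V A := by
  simpa only [S.const_eq, EReal.coe_zero] using
    S.E_le_V (S.const_mem 0) fun ω => Set.indicator_nonneg (fun _ _ => zero_le_one) ω

lemma V_le_one (A : Set Ω) : S.V A ≤ 1 := by
  simpa only [S.const_eq, EReal.coe_one] using
    S.V_le_E (S.const_mem 1) fun ω => Set.indicator_le_self' (fun _ _ => zero_le_one) ω

lemma V_univ : S.V Set.univ = 1 :=
  le_antisymm (S.V_le_one _) <| by
    simpa only [S.const_eq, EReal.coe_one] using S.E_le_V (S.const_mem 1) fun ω => by simp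

lemma coe_toReal_V (A : Set Ω) : ((S.V A).toReal : EReal) = S.V A :=
  EReal.coe_toReal ((S.V_le_one A).trans_lt (EReal.coe_lt_top 1)).ne
    ((EReal.bot_lt_coe 0).trans_le (S.V_nonneg A)).ne'

lemma toReal_V_mono {A B : Set Ω} (hAB : A ⊆ B) : (S.V A).toReal ≤ (S.V B).toReal := by
  rw [← EReal.coe_le_coe_iff, S.coe_toReal_V, S.coe_toReal_V]
  exact S.V_mono hAB

lemma erealToENNReal_V (A : Set Ω) : erealToENNReal (S.V A) = ENNReal.ofReal (S.V A).toReal :=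
  if_neg ((S.V_le_one A).trans_lt (EReal.coe_lt_top 1)).ne

lemma V_le_E_absRamp {Z : Ω → ℝ} (hZ : Z ∈ S.H) {a : ℝ} (ha : 0 < a) :
    S.V {ω | 2 * a ≤ |Z ω|} ≤ S.E (fun ω => absRamp a (Z ω)) := by
  refine S.V_le_E (S.comp_mem_of_lipschitzWith₁ hZ (lipschitzWith_absRamp ha)) fun ω => ?_
  by_cases hω : 2 * a ≤ |Z ω|
  · simp [hω, absRamp_eq_one ha hω]
  · simpa [hω] using (absRamp_mem_Icc (Z ω)).1

lemma choquet_lt_top_of_summable {Z : Ω → ℝ} (hZ : ∀ ω, 0 ≤ Z ω) {c : ℝ} (hc : 0 < c)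
    (hs : Summable fun m : ℕ => (S.V {ω | c * m ≤ Z ω}).toReal) : S.choquet Z < ⊤ := by
  have hneg : ∫⁻ t in Set.Iio 0, erealToENNReal (1 - S.V {ω | t ≤ Z ω}) = 0 := by
    refine setLIntegral_eq_zero measurableSet_Iio fun t (ht : t < 0) => ?_
    have huniv : {ω | t ≤ Z ω} = Set.univ := Set.eq_univ_of_forall fun ω => ht.le.trans (hZ ω)
    rw [huniv, S.V_univ, EReal.sub_self (by decide) (by decide)]
    simp [erealToENNReal]
  have hanti : Antitone fun t => ENNReal.ofReal (S.V {ω | t ≤ Z ω}).toReal := fun t t' htt' =>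
    ENNReal.ofReal_le_ofReal (S.toReal_V_mono fun ω (hω : t' ≤ Z ω) => htt'.trans hω)
  have hpos : ∫⁻ t in Set.Ioi 0, erealToENNReal (S.V {ω | t ≤ Z ω}) < ⊤ := by
    simp only [S.erealToENNReal_V]
    refine (lintegral_Ioi_le_tsum_mul_of_antitone hanti hc).trans_lt ?_
    rw [← ENNReal.ofReal_tsum_of_nonneg (fun m => EReal.toReal_nonneg (S.V_nonneg _)) hs]
    exact ENNReal.mul_lt_top ENNReal.ofReal_lt_top ENNReal.ofReal_lt_top
  rw [choquet, hneg, EReal.coe_ennreal_zero, sub_zero, ← EReal.coe_ennreal_top,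
    EReal.coe_ennreal_lt_coe_ennreal_iff]
  exact hpos

variable {S}

lemma IdentDistrib.E_comp_eq {X : ℕ → Ω → ℝ} (hid : S.IdentDistrib X) {i : ℕ} (hi : 1 ≤ i)
    {ψ : ℝ → ℝ} {K : ℝ≥0} (hψ : LipschitzWith K ψ) :
    S.E (fun ω => ψ (X i ω)) = S.E (fun ω => ψ (X 1 ω)) :=
  hid i hi (fun v => ψ (v 0)) (CLLip.of_lipschitzWith (hψ.comp (LipschitzWith.eval 0)))

/-- For a nonnegative test function, both integrability side conditions in `IndepTo` reduce to
finiteness of the iterated expectation. -/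
lemma IndepTo.E_append_eq {m n : ℕ} {Xs : Fin m → Ω → ℝ} {Ys : Fin n → Ω → ℝ}
    (hind : S.IndepTo Xs Ys) {φ : (Fin (m + n) → ℝ) → ℝ} (hφ : CLLip φ) (hφ0 : ∀ z, 0 ≤ φ z)
    {ψ : (Fin m → ℝ) → ℝ} (hψ0 : ∀ x, 0 ≤ ψ x)
    (hinner : ∀ x, S.E (fun ω => φ (Fin.append x fun i => Ys i ω)) = ψ x)
    (hψ : S.E (fun ω => ψ fun i => Xs i ω) ≠ ⊤) :
    S.E (fun ω => φ (Fin.append (fun i => Xs i ω) fun i => Ys i ω)) =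
      S.E (fun ω => ψ fun i => Xs i ω) := by
  have habs : ∀ z, |φ z| = φ z := fun z => abs_of_nonneg (hφ0 z)
  have h := hind φ hφ (fun x => by simp only [habs, hinner]; exact EReal.coe_ne_top _)
    (by simpa only [habs, hinner, EReal.toReal_coe, abs_of_nonneg (hψ0 _)] using hψ)
  simpa only [hinner, EReal.toReal_coe] using h

end SLE

def prodOneSub (f : ℕ → ℝ → ℝ) {m : ℕ} (x : Fin m → ℝ) : ℝ :=
  ∏ j : Fin m, (1 - f (j + 1) (x j))

section prodOneSub

variable {f : ℕ → ℝ → ℝ}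

lemma prodOneSub_mem_Icc (hf : ∀ k x, f k x ∈ Set.Icc 0 1) {m : ℕ} (x : Fin m → ℝ) :
    prodOneSub f x ∈ Set.Icc 0 1 :=
  ⟨prod_nonneg fun j _ => sub_nonneg.mpr (hf _ _).2,
    prod_le_one (fun j _ => sub_nonneg.mpr (hf _ _).2) fun j _ =>
      by linarith [(hf (j + 1) (x j)).1]⟩

lemma lipschitzWith_prodOneSub (hf : ∀ k x, f k x ∈ Set.Icc 0 1) {K : ℕ → ℝ≥0}
    (hfK : ∀ k, LipschitzWith (K k) (f k)) (m : ℕ) :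
    LipschitzWith (∑ j : Fin m, K (j + 1)) (prodOneSub f (m := m)) := by
  have h := LipschitzWith.prod_of_abs_le_one univ
    (f := fun (j : Fin m) (x : Fin m → ℝ) => 1 - f (j + 1) (x j))
    (fun j => (LipschitzWith.const 1).sub ((hfK _).comp (LipschitzWith.eval j)))
    fun j x => abs_le.mpr ⟨by linarith [(hf (j + 1) (x j)).2], by linarith [(hf (j + 1) (x j)).1]⟩
  simp only [zero_add, mul_one] at h
  exact h

lemma prodOneSub_append {m : ℕ} (x : Fin m → ℝ) (y : Fin 1 → ℝ) :
    prodOneSub f (Fin.append x y) = prodOneSub f x * (1 - f (m + 1) (y 0)) := by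
  simp [prodOneSub, Fin.append_right_eq_snoc, Fin.prod_univ_castSucc]

end prodOneSub

lemma fin_append_succ {α : Type*} (u : ℕ → α) (m : ℕ) :
    Fin.append (fun j : Fin m => u (j + 1)) (fun _ : Fin 1 => u (m + 1)) =
      fun j : Fin (m + 1) => u (j + 1) := by
  funext j
  refine Fin.lastCases ?_ (fun i => ?_) j <;> simp [Fin.append_right_eq_snoc]

namespace SLE

variable {Ω : Type*} {S : SLE Ω} {X : ℕ → Ω → ℝ} {f : ℕ → ℝ → ℝ} {K : ℕ → ℝ≥0}

lemma IndepTo.E_one_sub_prodOneSub_succ {m : ℕ}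
    (hind : S.IndepTo (fun j : Fin m => X (j + 1)) fun _ : Fin 1 => X (m + 1))
    (hX : ∀ i, 1 ≤ i → X i ∈ S.H) (hf : ∀ k x, f k x ∈ Set.Icc 0 1)
    (hfK : ∀ k, LipschitzWith (K k) (f k)) {u e : ℝ}
    (hu : S.E (fun ω => 1 - prodOneSub f fun j : Fin m => X (j + 1) ω) = u)
    (he : S.E (fun ω => f (m + 1) (X (m + 1) ω)) = e) :
    S.E (fun ω => 1 - prodOneSub f fun j : Fin (m + 1) => X (j + 1) ω) =
      ((1 - (1 - u) * (1 - e) : ℝ) : EReal) := by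
  have hP : ∀ x : Fin m → ℝ, prodOneSub f x ∈ Set.Icc 0 1 := prodOneSub_mem_Icc hf
  have hPX : (fun ω => 1 - prodOneSub f fun j : Fin m => X (j + 1) ω) ∈ S.H :=
    S.comp_mem_of_lipschitzWith (fun j => hX _ (by omega))
      ((LipschitzWith.const 1).sub (lipschitzWith_prodOneSub hf hfK m))
  have hfX : (fun ω => f (m + 1) (X (m + 1) ω)) ∈ S.H :=
    S.comp_mem_of_lipschitzWith₁ (hX _ (by omega)) (hfK _)
  have he0 : 0 ≤ e := EReal.coe_le_coe_iff.mp (he ▸ S.le_E_of_forall_le hfX fun ω => (hf _ _).1)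
  have he1 : e ≤ 1 := EReal.coe_le_coe_iff.mp (he ▸ S.E_le_of_forall_le hfX fun ω => (hf _ _).2)
  -- conditionally on the first `m` coordinates `x`, the expectation is affine in `f (X_{m+1})`
  have hinner : ∀ x : Fin m → ℝ,
      S.E (fun ω => 1 - prodOneSub f (Fin.append x fun _ : Fin 1 => X (m + 1) ω)) =
        ((1 - prodOneSub f x * (1 - e) : ℝ) : EReal) := fun x => by
    simp only [prodOneSub_append]
    convert S.E_const_add_mul hfX he (1 - prodOneSub f x) (hP x).1 using 3 <;> ring
  have houter : S.E (fun ω => 1 - prodOneSub f (fun j : Fin m => X (j + 1) ω) * (1 - e)) =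
      ((e + (1 - e) * u : ℝ) : EReal) := by
    convert S.E_const_add_mul hPX hu e (sub_nonneg.mpr he1) using 3; ring
  calc S.E (fun ω => 1 - prodOneSub f fun j : Fin (m + 1) => X (j + 1) ω)
      = S.E (fun ω => 1 - prodOneSub f
          (Fin.append (fun j : Fin m => X (j + 1) ω) fun _ : Fin 1 => X (m + 1) ω)) := by
        congr 1; funext ω; rw [fin_append_succ (fun k => X k ω)]
    _ = S.E (fun ω => 1 - prodOneSub f (fun j : Fin m => X (j + 1) ω) * (1 - e)) :=
        hind.E_append_eq (φ := fun z => 1 - prodOneSub f z)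
          (ψ := fun x => 1 - prodOneSub f x * (1 - e))
          (CLLip.of_lipschitzWith
            ((LipschitzWith.const 1).sub (lipschitzWith_prodOneSub hf hfK (m + 1))))
          (fun z => sub_nonneg.mpr (prodOneSub_mem_Icc hf z).2)
          (fun x => by nlinarith [(hP x).1, (hP x).2]) hinner
          (houter ▸ EReal.coe_ne_top _)
    _ = ((1 - (1 - u) * (1 - e) : ℝ) : EReal) := by rw [houter]; ring_nf

theorem IndepSeq.E_one_sub_prodOneSub (hind : S.IndepSeq X) (hX : ∀ i, 1 ≤ i → X i ∈ S.H)
    (hf : ∀ k x, f k x ∈ Set.Icc 0 1) (hfK : ∀ k, LipschitzWith (K k) (f k)) (m : ℕ) :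
    S.E (fun ω => 1 - prodOneSub f fun j : Fin m => X (j + 1) ω) =
      ((1 - ∏ k ∈ range m, (1 - (S.E fun ω => f (k + 1) (X (k + 1) ω)).toReal) : ℝ) : EReal) := by
  induction m with
  | zero => simp [prodOneSub, S.const_eq]
  | succ m ih =>
    have he := S.coe_toReal_E (S.comp_mem_of_lipschitzWith₁ (hX (m + 1) (by omega)) (hfK _))
      (fun ω => (hf (m + 1) _).1) fun ω => (hf (m + 1) _).2
    rw [prod_range_succ]
    rcases Nat.eq_zero_or_pos m with rfl | hm
    · simpa [prodOneSub] using he.symm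
    · rw [(hind m hm).E_one_sub_prodOneSub_succ hX hf hfK ih he.symm]
      ring_nf

theorem IndepSeq.V_iUnion_eq_one_of_not_summable (hind : S.IndepSeq X)
    (hX : ∀ i, 1 ≤ i → X i ∈ S.H) (hf : ∀ k x, f k x ∈ Set.Icc 0 1)
    (hfK : ∀ k, LipschitzWith (K k) (f k))
    (hdiv : ¬Summable fun k => (S.E fun ω => f (k + 1) (X (k + 1) ω)).toReal) :
    S.V (⋃ k, {ω | f (k + 1) (X (k + 1) ω) ≠ 0}) = 1 := by
  set U := ⋃ k, {ω | f (k + 1) (X (k + 1) ω) ≠ 0}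
  have he : ∀ k, (S.E fun ω => f (k + 1) (X (k + 1) ω)).toReal ∈ Set.Icc 0 1 := fun k =>
    S.toReal_E_mem_Icc (S.comp_mem_of_lipschitzWith₁ (hX (k + 1) (by omega)) (hfK _))
      (fun ω => (hf _ _).1) fun ω => (hf _ _).2
  have hlow : ∀ m : ℕ,
      1 - ∏ k ∈ range m, (1 - (S.E fun ω => f (k + 1) (X (k + 1) ω)).toReal) ≤ (S.V U).toReal := by
    intro m
    rw [← EReal.coe_le_coe_iff, S.coe_toReal_V, ← hind.E_one_sub_prodOneSub hX hf hfK m]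
    refine S.E_le_V (S.comp_mem_of_lipschitzWith (fun j => hX _ (by omega))
      ((LipschitzWith.const 1).sub (lipschitzWith_prodOneSub hf hfK m))) fun ω => ?_
    by_cases hω : ω ∈ U
    · simpa [hω] using (prodOneSub_mem_Icc hf _).1
    · have hzero : ∀ k, f (k + 1) (X (k + 1) ω) = 0 := fun k => by
        by_contra hk
        exact hω (Set.mem_iUnion.mpr ⟨k, hk⟩)
      simp [hω, prodOneSub, hzero]
  have h1 : 1 ≤ (S.V U).toReal := by
    have hlim := (tendsto_prod_one_sub_of_not_summable (fun k => (he k).1) (fun k => (he k).2)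
      hdiv).const_sub 1
    rw [sub_zero] at hlim
    exact le_of_tendsto' hlim hlow
  refine le_antisymm (S.V_le_one U) ?_
  rw [← S.coe_toReal_V]
  exact_mod_cast h1

/-- `absRamp (c k)` lies between the indicators of `{2 c k ≤ |x|}` and `{c k < |x|}`, so the
divergence of `∑ V(|X_1| ≥ 2 c k)` passes to the expectations in the product formula. -/
theorem IndepSeq.V_exists_mul_lt_abs_eq_one (hind : S.IndepSeq X) (hX : ∀ i, 1 ≤ i → X i ∈ S.H)
    (hid : S.IdentDistrib X) {c : ℝ} (hc : 0 < c)
    (hdiv : ¬Summable fun m : ℕ => (S.V {ω | 2 * c * m ≤ |X 1 ω|}).toReal) (N : ℕ) :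
    S.V {ω | ∃ k > N, c * k < |X k ω|} = 1 := by
  have hck : ∀ k > N, 0 < c * k := fun k hk => mul_pos hc (by exact_mod_cast (by omega : 0 < k))
  set f : ℕ → ℝ → ℝ := fun k => if N < k then absRamp (c * k) else 0
  have hf : ∀ k x, f k x ∈ Set.Icc 0 1 := fun k x => by
    by_cases hk : N < k
    · simpa [f, hk] using absRamp_mem_Icc x
    · simp [f, hk]
  have hfK : ∀ k, LipschitzWith (if N < k then Real.toNNReal (c * k)⁻¹ else 0) (f k) := fun k => by
    by_cases hk : N < k
    · simpa [f, hk] using lipschitzWith_absRamp (hck k hk)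
    · simp [f, hk]
  have hU : (⋃ k, {ω | f (k + 1) (X (k + 1) ω) ≠ 0}) ⊆ {ω | ∃ k > N, c * k < |X k ω|} := by
    refine Set.iUnion_subset fun k ω hω => ?_
    by_cases hk : N < k + 1
    · refine ⟨k + 1, hk, ?_⟩
      simpa using lt_abs_of_absRamp_ne_zero (hck _ hk) (by simpa [f, hk] using hω)
    · simp [f, hk] at hω
  have hbound : ∀ k > N,
      (S.V {ω | 2 * c * k ≤ |X 1 ω|}).toReal ≤ (S.E fun ω => f k (X k ω)).toReal := by
    intro k hk
    have hEk : S.E (fun ω => f k (X k ω)) = S.E (fun ω => absRamp (c * k) (X 1 ω)) := by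
      simp only [f, if_pos hk]
      exact hid.E_comp_eq (by omega) (lipschitzWith_absRamp (hck k hk))
    rw [← EReal.coe_le_coe_iff, S.coe_toReal_V,
      S.coe_toReal_E (S.comp_mem_of_lipschitzWith₁ (hX k (by omega)) (hfK k))
        (fun ω => (hf _ _).1) fun ω => (hf _ _).2, hEk]
    simpa [mul_assoc] using S.V_le_E_absRamp (hX 1 le_rfl) (hck k hk)
  have hdiv' : ¬Summable fun k => (S.E fun ω => f (k + 1) (X (k + 1) ω)).toReal := fun hs =>
    hdiv <| (summable_nat_add_iff (N + 1)).mp <| ((summable_nat_add_iff N).mpr hs).of_nonneg_of_le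
      (fun m => EReal.toReal_nonneg (S.V_nonneg _)) fun m => hbound (m + N + 1) (by omega)
  exact le_antisymm (S.V_le_one _)
    ((hind.V_iUnion_eq_one_of_not_summable hX hf hfK hdiv').symm.le.trans (S.V_mono hU))

end SLE

theorem slln_converse_part_general {Ω : Type*} (S : SLE Ω) (X : ℕ → Ω → ℝ)
    (hH : ∀ i, 1 ≤ i → X i ∈ S.H)
    (hid : S.IdentDistrib X)
    (hind : S.IndepSeq X)
    (hVabove : ∀ A : ℕ → Set Ω, Antitone A → S.V (⋂ i, A i) = ⨅ i, S.V (A i))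
    (hlt : S.V {ω | Filter.limsup
        (fun n : ℕ => ((|∑ k ∈ Finset.Icc 1 n, X k ω| / n : ℝ) : EReal)) atTop = ⊤} < 1) :
    S.choquet (fun ω => |X 1 ω|) < ⊤ := by
  by_contra hC
  have hdiv : ∀ c > 0, ¬Summable fun m : ℕ => (S.V {ω | c * m ≤ |X 1 ω|}).toReal :=
    fun c hc hs => hC (S.choquet_lt_top_of_summable (fun ω => abs_nonneg _) hc hs)
  have hV_iInter : ∀ A : ℕ → Set Ω, Antitone A → (∀ i, S.V (A i) = 1) → S.V (⋂ i, A i) = 1 :=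
    fun A hA h1 => by simp [hVabove A hA, h1]
  set A : ℕ → Set Ω := fun n => {ω | ∃ᶠ k in atTop, ((n : ℝ) + 1) * k < |X k ω|}
  have hA : ∀ n, S.V (A n) = 1 := fun n => by
    have hA_eq : A n = ⋂ N, {ω | ∃ k > N, ((n : ℝ) + 1) * k < |X k ω|} := by
      ext ω; simp [A, frequently_atTop']
    rw [hA_eq]
    refine hV_iInter _ (fun N N' hN ω ⟨k, hk, hω⟩ => ⟨k, lt_of_le_of_lt hN hk, hω⟩) fun N =>
      hind.V_exists_mul_lt_abs_eq_one hH hid (by positivity) (hdiv _ (by positivity)) N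
  have hAanti : Antitone A := fun n n' hn ω (hω : ∃ᶠ k in atTop, _) =>
    hω.mono fun k hk => lt_of_le_of_lt (by gcongr) hk
  refine hlt.not_ge (hV_iInter A hAanti hA ▸ S.V_mono fun ω hω =>
    limsup_abs_sum_Icc_div_eq_top fun C => ?_)
  obtain ⟨n, hn⟩ := exists_nat_ge C
  exact (Set.mem_iInter.mp hω n).mono fun k hk =>
    lt_of_le_of_lt (mul_le_mul_of_nonneg_right (by linarith) k.cast_nonneg) hk

/-- **Strong law of large numbers, converse part (Theorem 3(b)).**
Let `{X_n ; n ≥ 1}` be independent and identically distributed random variables and `V`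
the capacity generated by `E`. If `V` is continuous (from below and from above) and
`V(limsup |S_n|/n = +∞) < 1`, then `C_V[|X_1|] < ∞`. -/
theorem slln_converse_part {Ω : Type*} (S : SLE Ω) (X : ℕ → Ω → ℝ)
    (hH : ∀ i, 1 ≤ i → X i ∈ S.H)
    (hid : S.IdentDistrib X)
    (hind : S.IndepSeq X)
    (hVbelow : ∀ A : ℕ → Set Ω, Monotone A → S.V (⋃ i, A i) = ⨆ i, S.V (A i))
    (hVabove : ∀ A : ℕ → Set Ω, Antitone A → S.V (⋂ i, A i) = ⨅ i, S.V (A i))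
    (hlt : S.V {ω | Filter.limsup
        (fun n : ℕ => ((|∑ k ∈ Finset.Icc 1 n, X k ω| / n : ℝ) : EReal)) atTop = ⊤} < 1) :
    S.choquet (fun ω => |X 1 ω|) < ⊤ :=
  slln_converse_part_general S X hH hid hind hVabove hlt
end
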